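/- arXiv:2104.12508 — 2 statements merged into one kernel-verified Lean document; each statement's English description precedes it below -/
import Mathlib

section
/- There is a computable reduction showing: the problem of deciding, for two disjoint automatic relations R₁, R₂ ⊆ Σ* × Γ*, whether there exists a recognizable relation R with R₁ ⊆ R and R ∩ R₂ = ∅, reduces to the resynchronized definability problem with source and target languages of finite shiftlag. Concretely, with S the (ΣΓ)*(Σ* + Γ*)-controlled representation of the complement of R₂ and T = Σ*Γ* ∪ M where M is the (ΣΓ)*(Σ* + Γ*)-controlled representation of (complement of R₁) ∩ (complement of R₂), one has: ⟦S⟧ ∈ Rel(T) if and only if R₁ and R₂ are separable by a recognizable relation. -/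
open List

/-- A language is regular. -/
def IsReg {α : Type} (L : Set (List α)) : Prop := Language.IsRegular L

/-- Erase output letters: keep the Σ-part of a synchronization word. -/
def piIn {σ γ : Type} (w : List (σ ⊕ γ)) : List σ := w.filterMap Sum.getLeft?
/-- Erase input letters: keep the Γ-part of a synchronization word. -/
def piOut {σ γ : Type} (w : List (σ ⊕ γ)) : List γ := w.filterMap Sum.getRight?
/-- `⟦w⟧`, the pair synchronized by `w`. -/
def syncPair {σ γ : Type} (w : List (σ ⊕ γ)) : List σ × List γ := (piIn w, piOut w)
/-- `⟦L⟧`, the relation defined by a synchronization language. -/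
def syncRel {σ γ : Type} (L : Set (List (σ ⊕ γ))) : Set (List σ × List γ) := syncPair '' L

def rdom {σ γ : Type} (R : Set (List σ × List γ)) : Set (List σ) := {u | ∃ v, (u, v) ∈ R}

/-- A recognizable relation: a finite union of products of regular languages. -/
def Recognizable {σ γ : Type} (R : Set (List σ × List γ)) : Prop :=
  ∃ (n : ℕ) (U : Fin n → Set (List σ)) (V : Fin n → Set (List γ)),
    (∀ i, IsReg (U i) ∧ IsReg (V i)) ∧
    R = ⋃ i, {p : List σ × List γ | p.1 ∈ U i ∧ p.2 ∈ V i}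

/-- lag of the (1-based) position `i` of `w`. -/
def lagAt {σ γ : Type} (w : List (σ ⊕ γ)) (i : ℕ) : ℕ :=
  ((((w.take i).countP Sum.isLeft : ℕ) : ℤ) - (((w.take i).countP Sum.isRight : ℕ) : ℤ)).natAbs

/-- maximal lag of a position of `w`. -/
def lagW {σ γ : Type} (w : List (σ ⊕ γ)) : ℕ := (Finset.range (w.length + 1)).sup (lagAt w)

/-- number of shifts of `w`. -/
def shiftCount {σ γ : Type} (w : List (σ ⊕ γ)) : ℕ :=
  (w.zip w.tail).countP fun p => p.1.isLeft != p.2.isLeft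

/-- the (0-based) list of shift positions of `w`, in increasing order. -/
def shiftList {σ γ : Type} (w : List (σ ⊕ γ)) : List ℕ :=
  (List.range w.length).filter fun j =>
    decide (j + 1 < w.length) &&
      decide ((w[j]?).map Sum.isLeft ≠ (w[j + 1]?).map Sum.isLeft)

/-- shiftlag of `w`: the largest `n` such that `w` has `n` consecutive shifts that are all
`≥n`-lagged. -/
noncomputable def shiftlagW {σ γ : Type} (w : List (σ ⊕ γ)) : ℕ :=
  sSup {n : ℕ | ∃ l : List ℕ, l <:+: shiftList w ∧ l.length = n ∧ ∀ j ∈ l, n ≤ lagAt w (j + 1)}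

def FiniteShift {σ γ : Type} (L : Set (List (σ ⊕ γ))) : Prop := ∃ k, ∀ w ∈ L, shiftCount w ≤ k
def FiniteLag {σ γ : Type} (L : Set (List (σ ⊕ γ))) : Prop := ∃ k, ∀ w ∈ L, lagW w ≤ k
def FiniteShiftlag {σ γ : Type} (L : Set (List (σ ⊕ γ))) : Prop := ∃ k, ∀ w ∈ L, shiftlagW w ≤ k

/-- left quotient `u⁻¹L`. -/
def leftQuot {α : Type} (u : List α) (L : Set (List α)) : Set (List α) := {z | u ++ z ∈ L}

/-- `w ⪯_T w'` : `w` is at most as synchronous as `w'` inside `T`. -/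
def syncLe {σ γ : Type} (T : Set (List (σ ⊕ γ))) (w w' : List (σ ⊕ γ)) : Prop :=
  ∀ i : ℕ, FiniteShift (leftQuot (w'.take i) T) → FiniteShift (leftQuot (w.take i) T)

def allsync {σ γ : Type} (S T : Set (List (σ ⊕ γ))) : Set (List (σ ⊕ γ)) :=
  {w | w ∈ T ∧ syncPair w ∈ syncRel S}

def maxsync {σ γ : Type} (S T : Set (List (σ ⊕ γ))) : Set (List (σ ⊕ γ)) :=
  {w | w ∈ T ∧ syncPair w ∈ syncRel S ∧
    ∀ w' ∈ T, syncPair w' = syncPair w → syncLe T w' w}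

def minsync {σ γ : Type} (S T : Set (List (σ ⊕ γ))) : Set (List (σ ⊕ γ)) :=
  {w | w ∈ T ∧ syncPair w ∈ syncRel S ∧
    ∀ w' ∈ T, syncPair w' = syncPair w → syncLe T w w'}

/-- `Rel(T)`: relations definable by regular subsets of `T`. -/
def RelOf {σ γ : Type} (T : Set (List (σ ⊕ γ))) : Set (Set (List σ × List γ)) :=
  {R | ∃ T' : Set (List (σ ⊕ γ)), T' ⊆ T ∧ IsReg T' ∧ syncRel T' = R}

/-- the canonical synchronization language `(ΣΓ)*(Σ* + Γ*)` of automatic relations. -/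
def CanonAut (σ γ : Type) : Set (List (σ ⊕ γ)) :=
  {w | ∃ (p : List (σ × γ)) (x : List σ) (y : List γ),
    (x = [] ∨ y = []) ∧
    w = (p.flatMap fun ab => [Sum.inl ab.1, Sum.inr ab.2]) ++ x.map Sum.inl ++ y.map Sum.inr}

/-- the canonical synchronization language `Σ*Γ*` of recognizable relations. -/
def InOut (σ γ : Type) : Set (List (σ ⊕ γ)) :=
  {w | ∃ (x : List σ) (y : List γ), w = x.map Sum.inl ++ y.map Sum.inr}

/-- An automatic relation: definable by a regular subset of `(ΣΓ)*(Σ* + Γ*)`. -/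
def Automatic {σ γ : Type} (R : Set (List σ × List γ)) : Prop :=
  ∃ L : Set (List (σ ⊕ γ)), L ⊆ CanonAut σ γ ∧ IsReg L ∧ syncRel L = R

/-- `x` and `y` are compatible: equal length and extendable to a common pair. -/
def Compatible {σ γ : Type} (x y : List (σ ⊕ γ)) : Prop :=
  x.length = y.length ∧ ∃ u v : List (σ ⊕ γ), syncPair (x ++ u) = syncPair (y ++ v)

/-- `diff(x,y) = (u,v)`: `u,v` are the shortest words with `⟦xu⟧ = ⟦yv⟧`. -/
def IsDiff {σ γ : Type} (x y u v : List (σ ⊕ γ)) : Prop :=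
  syncPair (x ++ u) = syncPair (y ++ v) ∧
    ∀ u' v' : List (σ ⊕ γ), syncPair (x ++ u') = syncPair (y ++ v') →
      u.length ≤ u'.length ∧ v.length ≤ v'.length

/-!
Pairs of `R1` are never synchronized by words of `M`, so if a regular `T' ⊆ Σ*Γ* ∪ M` defines
`R2ᶜ`, every pair of `R1` is defined by a word of `T' ∩ Σ*Γ*`; this regular subset of `Σ*Γ*`
defines a recognizable relation, which separates `R1` from `R2`. Conversely, a recognizable
separator `R` has a regular `Σ*Γ*`-representation, and its union with `M` defines
`R ∪ (R1ᶜ ∩ R2ᶜ) = R2ᶜ`.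

Regularity is checked throughout with the Myhill–Nerode theorem: `(ΣΓ)*(Σ* + Γ*)` and `Σ*Γ*`
lie in a finite family of languages closed under left quotients by letters, and preimages under
concatenation-preserving maps and finite unions of regular languages have finitely many left
quotients.
-/

section Regular

variable {α β : Type}

theorem isReg_iff_finite_range_leftQuot {L : Set (List α)} :
    IsReg L ↔ (Set.range fun x => leftQuot x L).Finite :=
  Language.isRegular_iff_finite_range_leftQuotient

theorem leftQuot_append (x y : List α) (L : Set (List α)) :
    leftQuot (x ++ y) L = leftQuot y (leftQuot x L) := by
  ext z
  simp [leftQuot]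

@[simp] theorem leftQuot_empty (u : List α) : leftQuot u (∅ : Set (List α)) = ∅ := rfl

theorem isReg_of_leftQuot_mem {𝓕 : Set (Set (List α))} (h𝓕 : 𝓕.Finite)
    (hstep : ∀ K ∈ 𝓕, ∀ a, leftQuot [a] K ∈ 𝓕) {L : Set (List α)} (hL : L ∈ 𝓕) : IsReg L := by
  refine isReg_iff_finite_range_leftQuot.2 (h𝓕.subset (Set.range_subset_iff.2 fun x => ?_))
  induction x using List.reverseRecOn with
  | nil => exact hL
  | append_singleton x a ih => rw [leftQuot_append]; exact hstep _ ih a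

theorem IsReg.preimage {L : Set (List β)} (h : IsReg L) {f : List α → List β}
    (hf : ∀ x y, f (x ++ y) = f x ++ f y) : IsReg (f ⁻¹' L) := by
  refine isReg_iff_finite_range_leftQuot.2
    ((isReg_iff_finite_range_leftQuot.1 h |>.image (f ⁻¹' ·)).subset ?_)
  rintro _ ⟨x, rfl⟩
  refine ⟨leftQuot (f x) L, ⟨f x, rfl⟩, ?_⟩
  ext y
  simp [leftQuot, hf]

theorem isReg_iUnion {ι : Type*} [Finite ι] {L : ι → Set (List α)} (h : ∀ i, IsReg (L i)) :
    IsReg (⋃ i, L i) := by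
  refine isReg_iff_finite_range_leftQuot.2
    (((Set.Finite.pi fun i => isReg_iff_finite_range_leftQuot.1 (h i)).image
      (fun K => ⋃ i, K i)).subset ?_)
  rintro _ ⟨x, rfl⟩
  refine ⟨fun i => leftQuot x (L i), fun i _ => ⟨x, rfl⟩, ?_⟩
  ext y
  simp [leftQuot]

theorem IsReg.union {L₁ L₂ : Set (List α)} (h₁ : IsReg L₁) (h₂ : IsReg L₂) : IsReg (L₁ ∪ L₂) :=
  Language.IsRegular.add h₁ h₂

theorem IsReg.inter {L₁ L₂ : Set (List α)} (h₁ : IsReg L₁) (h₂ : IsReg L₂) : IsReg (L₁ ∩ L₂) :=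
  Language.IsRegular.inf h₁ h₂

theorem IsReg.compl {L : Set (List α)} (h : IsReg L) : IsReg Lᶜ :=
  Language.IsRegular.compl h

end Regular

section Words

variable {σ γ : Type}

@[simp] theorem piIn_nil : piIn ([] : List (σ ⊕ γ)) = [] := rfl
@[simp] theorem piOut_nil : piOut ([] : List (σ ⊕ γ)) = [] := rfl
@[simp] theorem piIn_cons_inl (a : σ) (w : List (σ ⊕ γ)) : piIn (.inl a :: w) = a :: piIn w := rfl
@[simp] theorem piIn_cons_inr (b : γ) (w : List (σ ⊕ γ)) : piIn (.inr b :: w) = piIn w := rfl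
@[simp] theorem piOut_cons_inl (a : σ) (w : List (σ ⊕ γ)) : piOut (.inl a :: w) = piOut w := rfl
@[simp] theorem piOut_cons_inr (b : γ) (w : List (σ ⊕ γ)) : piOut (.inr b :: w) = b :: piOut w :=
  rfl

@[simp] theorem piIn_append (u v : List (σ ⊕ γ)) : piIn (u ++ v) = piIn u ++ piIn v :=
  List.filterMap_append
@[simp] theorem piOut_append (u v : List (σ ⊕ γ)) : piOut (u ++ v) = piOut u ++ piOut v :=
  List.filterMap_append

@[simp] theorem piIn_map_inl (x : List σ) : piIn (x.map Sum.inl : List (σ ⊕ γ)) = x := by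
  induction x <;> simp_all
@[simp] theorem piIn_map_inr (y : List γ) : piIn (y.map Sum.inr : List (σ ⊕ γ)) = [] := by
  induction y <;> simp_all
@[simp] theorem piOut_map_inl (x : List σ) : piOut (x.map Sum.inl : List (σ ⊕ γ)) = [] := by
  induction x <;> simp_all
@[simp] theorem piOut_map_inr (y : List γ) : piOut (y.map Sum.inr : List (σ ⊕ γ)) = y := by
  induction y <;> simp_all

end Words

section Shapes
variable {σ γ : Type}

def inlStar (σ γ : Type) : Set (List (σ ⊕ γ)) := Set.range (List.map Sum.inl)
def inrStar (σ γ : Type) : Set (List (σ ⊕ γ)) := Set.range (List.map Sum.inr)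

def canonAutQuotInl (σ γ : Type) : Set (List (σ ⊕ γ)) :=
  {w | w ∈ inlStar σ γ ∨ ∃ b w', w = .inr b :: w' ∧ w' ∈ CanonAut σ γ}

@[simp] theorem leftQuot_inl_inlStar (a : σ) : leftQuot [.inl a] (inlStar σ γ) = inlStar σ γ := by
  ext w; simp [leftQuot, inlStar, List.map_eq_cons_iff]
@[simp] theorem leftQuot_inr_inlStar (b : γ) : leftQuot [.inr b] (inlStar σ γ) = ∅ := by
  ext w; simp [leftQuot, inlStar, List.map_eq_cons_iff]
@[simp] theorem leftQuot_inl_inrStar (a : σ) : leftQuot [.inl a] (inrStar σ γ) = ∅ := by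
  ext w; simp [leftQuot, inrStar, List.map_eq_cons_iff]
@[simp] theorem leftQuot_inr_inrStar (b : γ) : leftQuot [.inr b] (inrStar σ γ) = inrStar σ γ := by
  ext w; simp [leftQuot, inrStar, List.map_eq_cons_iff]

@[simp] theorem leftQuot_inl_inOut (a : σ) : leftQuot [.inl a] (InOut σ γ) = InOut σ γ := by
  ext w; simp [leftQuot, InOut, List.cons_eq_append_iff, List.map_eq_cons_iff]
  exact exists_comm
@[simp] theorem leftQuot_inr_inOut (b : γ) : leftQuot [.inr b] (InOut σ γ) = inrStar σ γ := by
  ext w; simp [leftQuot, InOut, inrStar, List.cons_eq_append_iff, List.map_eq_cons_iff]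

@[simp] theorem leftQuot_inl_canonAutQuotInl (a : σ) :
    leftQuot [.inl a] (canonAutQuotInl σ γ) = inlStar σ γ := by
  ext w; simp [leftQuot, canonAutQuotInl, inlStar, List.map_eq_cons_iff]
@[simp] theorem leftQuot_inr_canonAutQuotInl (b : γ) :
    leftQuot [.inr b] (canonAutQuotInl σ γ) = CanonAut σ γ := by
  ext w; simp [leftQuot, canonAutQuotInl, inlStar, List.map_eq_cons_iff]

theorem mem_canonAut_iff {w : List (σ ⊕ γ)} :
    w ∈ CanonAut σ γ ↔ w ∈ inlStar σ γ ∨ w ∈ inrStar σ γ ∨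
      ∃ a b w', w = .inl a :: .inr b :: w' ∧ w' ∈ CanonAut σ γ := by
  constructor
  · rintro ⟨_ | ⟨⟨a, b⟩, p⟩, x, y, hxy, rfl⟩
    · rcases hxy with rfl | rfl
      · exact Or.inr (Or.inl ⟨y, by simp⟩)
      · exact Or.inl ⟨x, by simp⟩
    · exact Or.inr (Or.inr ⟨a, b, _, by simp, p, x, y, hxy, rfl⟩)
  · rintro (⟨x, rfl⟩ | ⟨y, rfl⟩ | ⟨a, b, _, rfl, p, x, y, hxy, rfl⟩)
    · exact ⟨[], x, [], Or.inr rfl, by simp⟩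
    · exact ⟨[], [], y, Or.inl rfl, by simp⟩
    · exact ⟨(a, b) :: p, x, y, hxy, by simp⟩

@[simp] theorem leftQuot_inl_canonAut (a : σ) :
    leftQuot [.inl a] (CanonAut σ γ) = canonAutQuotInl σ γ := by
  ext w
  change _ :: w ∈ CanonAut σ γ ↔ _
  rw [mem_canonAut_iff]
  simp [canonAutQuotInl, inlStar, inrStar, List.map_eq_cons_iff]

@[simp] theorem leftQuot_inr_canonAut (b : γ) :
    leftQuot [.inr b] (CanonAut σ γ) = inrStar σ γ := by
  ext w
  change _ :: w ∈ CanonAut σ γ ↔ _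
  rw [mem_canonAut_iff]
  simp [inlStar, inrStar, List.map_eq_cons_iff]

def syncShapes (σ γ : Type) : Set (Set (List (σ ⊕ γ))) :=
  {CanonAut σ γ, canonAutQuotInl σ γ, InOut σ γ, inlStar σ γ, inrStar σ γ, ∅}

theorem isReg_of_mem_syncShapes {L : Set (List (σ ⊕ γ))} (hL : L ∈ syncShapes σ γ) : IsReg L :=
  isReg_of_leftQuot_mem (by simp [syncShapes])
    (by rintro K (rfl | rfl | rfl | rfl | rfl | rfl) (a | b) <;> simp [syncShapes]) hL

theorem isReg_canonAut : IsReg (CanonAut σ γ) := isReg_of_mem_syncShapes (by simp [syncShapes])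

theorem isReg_inOut : IsReg (InOut σ γ) := isReg_of_mem_syncShapes (by simp [syncShapes])

end Shapes

section Representations
variable {σ γ : Type}

def canon : List σ → List γ → List (σ ⊕ γ)
  | [], v => v.map Sum.inr
  | u, [] => u.map Sum.inl
  | a :: u, b :: v => .inl a :: .inr b :: canon u v

theorem canon_mem_canonAut (u : List σ) (v : List γ) : canon u v ∈ CanonAut σ γ := by
  induction u, v using canon.induct with
  | case1 v => exact ⟨[], [], v, Or.inl rfl, by simp [canon]⟩
  | case2 u hu => exact ⟨[], u, [], Or.inr rfl, by cases u <;> simp [canon]⟩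
  | case3 a u b v ih =>
    obtain ⟨p, x, y, hxy, hw⟩ := ih
    exact ⟨(a, b) :: p, x, y, hxy, by simp [canon, hw]⟩

@[simp] theorem syncPair_canon (u : List σ) (v : List γ) : syncPair (canon u v) = (u, v) := by
  induction u, v using canon.induct with
  | case1 v => simp [canon, syncPair]
  | case2 u hu => cases u <;> simp_all [canon, syncPair]
  | case3 a u b v ih => simp_all [canon, syncPair]

theorem canon_syncPair {w : List (σ ⊕ γ)} (hw : w ∈ CanonAut σ γ) :
    canon (piIn w) (piOut w) = w := by
  obtain ⟨p, x, y, hxy, rfl⟩ := hw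
  induction p with
  | nil =>
    rcases hxy with rfl | rfl
    · simp [canon]
    · cases x <;> simp [canon]
  | cons ab p ih => simpa [canon] using ih

theorem syncPair_injOn_canonAut : Set.InjOn syncPair (CanonAut σ γ) := fun w hw w' hw' h => by
  rw [← canon_syncPair hw, ← canon_syncPair hw']
  simp_all [syncPair]

theorem map_piIn_append_map_piOut {w : List (σ ⊕ γ)} (hw : w ∈ InOut σ γ) :
    (piIn w).map Sum.inl ++ (piOut w).map Sum.inr = w := by
  obtain ⟨x, y, rfl⟩ := hw
  simp

theorem mem_syncRel_iff_of_subset_inOut {L : Set (List (σ ⊕ γ))} (hL : L ⊆ InOut σ γ)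
    (u : List σ) (v : List γ) : (u, v) ∈ syncRel L ↔ u.map Sum.inl ++ v.map Sum.inr ∈ L := by
  constructor
  · rintro ⟨w, hw, hwp⟩
    simp only [syncPair, Prod.mk.injEq] at hwp
    rwa [← hwp.1, ← hwp.2, map_piIn_append_map_piOut (hL hw)]
  · exact fun h => ⟨_, h, by simp [syncPair]⟩

theorem syncRel_union (L₁ L₂ : Set (List (σ ⊕ γ))) :
    syncRel (L₁ ∪ L₂) = syncRel L₁ ∪ syncRel L₂ :=
  Set.image_union _ _ _

def canonRep (R : Set (List σ × List γ)) : Set (List (σ ⊕ γ)) :=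
  {w | w ∈ CanonAut σ γ ∧ syncPair w ∈ R}

def inOutRep (R : Set (List σ × List γ)) : Set (List (σ ⊕ γ)) :=
  {w | w ∈ InOut σ γ ∧ syncPair w ∈ R}

theorem syncRel_canonRep (R : Set (List σ × List γ)) : syncRel (canonRep R) = R := by
  refine Set.Subset.antisymm (fun _ ⟨_, hw, hp⟩ => hp ▸ hw.2) fun p hp => ?_
  exact ⟨canon p.1 p.2, ⟨canon_mem_canonAut _ _, by simpa using hp⟩, by simp⟩

theorem syncRel_inOutRep (R : Set (List σ × List γ)) : syncRel (inOutRep R) = R := by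
  refine Set.Subset.antisymm (fun _ ⟨_, hw, hp⟩ => hp ▸ hw.2) fun p hp => ?_
  exact ⟨p.1.map Sum.inl ++ p.2.map Sum.inr, ⟨⟨_, _, rfl⟩, by simpa [syncPair] using hp⟩,
    by simp [syncPair]⟩

theorem eq_canonRep_syncRel {L : Set (List (σ ⊕ γ))} (hL : L ⊆ CanonAut σ γ) :
    L = canonRep (syncRel L) := by
  refine Set.Subset.antisymm (fun w hw => ⟨hL hw, w, hw, rfl⟩) ?_
  rintro w ⟨hw, w', hw', hp⟩
  rwa [← syncPair_injOn_canonAut (hL hw') hw hp]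

theorem Automatic.isReg_canonRep {R : Set (List σ × List γ)} (h : Automatic R) :
    IsReg (canonRep R) := by
  obtain ⟨L, hL, hreg, rfl⟩ := h
  rwa [← eq_canonRep_syncRel hL]

theorem automatic_canonRep {R : Set (List σ × List γ)} (h : IsReg (canonRep R)) :
    Automatic R :=
  ⟨canonRep R, fun _ hw => hw.1, h, syncRel_canonRep R⟩

theorem Automatic.compl {R : Set (List σ × List γ)} (h : Automatic R) : Automatic Rᶜ := by
  refine automatic_canonRep ?_
  have : canonRep Rᶜ = CanonAut σ γ ∩ (canonRep R)ᶜ := by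
    ext w; simp +contextual [canonRep]
  rw [this]
  exact isReg_canonAut.inter h.isReg_canonRep.compl

theorem Automatic.inter {R₁ R₂ : Set (List σ × List γ)} (h₁ : Automatic R₁) (h₂ : Automatic R₂) :
    Automatic (R₁ ∩ R₂) := by
  refine automatic_canonRep ?_
  have : canonRep (R₁ ∩ R₂) = canonRep R₁ ∩ canonRep R₂ := by
    ext w; simp [canonRep]
  rw [this]
  exact h₁.isReg_canonRep.inter h₂.isReg_canonRep

end Representations

section Recognizable
variable {σ γ : Type}

theorem recognizable_iUnion_prod {ι : Type*} [Finite ι] {U : ι → Set (List σ)}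
    {V : ι → Set (List γ)} (hU : ∀ i, IsReg (U i)) (hV : ∀ i, IsReg (V i)) :
    Recognizable (⋃ i, U i ×ˢ V i) := by
  obtain ⟨n, ⟨e⟩⟩ := Finite.exists_equiv_fin ι
  refine ⟨n, U ∘ e.symm, V ∘ e.symm, fun i => ⟨hU _, hV _⟩, ?_⟩
  exact (e.symm.surjective.iUnion_comp fun i => U i ×ˢ V i).symm

theorem Recognizable.isReg_inOutRep {R : Set (List σ × List γ)} (h : Recognizable R) :
    IsReg (inOutRep R) := by
  obtain ⟨n, U, V, hUV, rfl⟩ := h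
  have : inOutRep (⋃ i, {p : List σ × List γ | p.1 ∈ U i ∧ p.2 ∈ V i}) =
      ⋃ i, InOut σ γ ∩ piIn ⁻¹' U i ∩ piOut ⁻¹' V i := by
    ext w; simp [inOutRep, syncPair, and_assoc]
  rw [this]
  exact isReg_iUnion fun i => (isReg_inOut.inter ((hUV i).1.preimage piIn_append)).inter
    ((hUV i).2.preimage piOut_append)

theorem recognizable_syncRel_of_subset_inOut {L : Set (List (σ ⊕ γ))} (hL : IsReg L)
    (hsub : L ⊆ InOut σ γ) : Recognizable (syncRel L) := by
  obtain ⟨Q, _, M, rfl⟩ := hL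
  -- a pair is accepted iff the state reached on its input half accepts its output half
  have : syncRel M.accepts = ⋃ q : Q,
      (List.map Sum.inl ⁻¹' (⟨M.step, M.start, {q}⟩ : DFA _ Q).accepts) ×ˢ
      (List.map Sum.inr ⁻¹' (⟨M.step, q, M.accept⟩ : DFA _ Q).accepts) := by
    ext ⟨u, v⟩
    rw [mem_syncRel_iff_of_subset_inOut hsub]
    simp only [Set.mem_iUnion, Set.mem_prod]
    change M.evalFrom M.start _ ∈ M.accept ↔
      ∃ q, M.evalFrom M.start (u.map .inl) = q ∧ M.evalFrom q (v.map .inr) ∈ M.accept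
    rw [DFA.evalFrom_of_append]
    exact ⟨fun h => ⟨_, rfl, h⟩, fun ⟨_, hq, h⟩ => hq ▸ h⟩
  rw [this]
  exact recognizable_iUnion_prod
    (fun _ => IsReg.preimage ⟨Q, inferInstance, _, rfl⟩ fun _ _ => List.map_append)
    (fun _ => IsReg.preimage ⟨Q, inferInstance, _, rfl⟩ fun _ _ => List.map_append)

end Recognizable

/-- separability of disjoint automatic relations by a recognizable relation
reduces to the resynchronized definability problem with finite-shiftlag source and target:
with `S` the canonical representation of `R₂ᶜ` and `T = Σ*Γ* ∪ M`, where `M` is the canonical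
representation of `R₁ᶜ ∩ R₂ᶜ`, one has `⟦S⟧ ∈ Rel(T)` iff `R₁, R₂` are separable. -/
theorem stmt9 {σ γ : Type} (R1 R2 : Set (List σ × List γ))
    (h1 : Automatic R1) (h2 : Automatic R2) (hdisj : Disjoint R1 R2) :
    let S : Set (List (σ ⊕ γ)) := {w | w ∈ CanonAut σ γ ∧ syncPair w ∈ R2ᶜ}
    let M : Set (List (σ ⊕ γ)) := {w | w ∈ CanonAut σ γ ∧ syncPair w ∈ R1ᶜ ∩ R2ᶜ}
    let T : Set (List (σ ⊕ γ)) := InOut σ γ ∪ M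
    (syncRel S ∈ RelOf T ↔ ∃ R, Recognizable R ∧ R1 ⊆ R ∧ Disjoint R R2) := by
  intro S M T
  have hS : syncRel S = R2ᶜ := syncRel_canonRep _
  have hM : syncRel M = R1ᶜ ∩ R2ᶜ := syncRel_canonRep _
  constructor
  · rintro ⟨T', hT'T, hT'reg, hT'S⟩
    rw [hS] at hT'S
    refine ⟨syncRel (T' ∩ InOut σ γ), recognizable_syncRel_of_subset_inOut
      (hT'reg.inter isReg_inOut) Set.inter_subset_right, fun p hp => ?_, ?_⟩
    · obtain ⟨w, hw, rfl⟩ := hT'S.ge (Set.disjoint_left.1 hdisj hp)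
      exact ⟨w, ⟨hw, (hT'T hw).resolve_right fun hwM => hwM.2.1 hp⟩, rfl⟩
    · exact Set.disjoint_left.2 fun p hp => hT'S.le (Set.image_mono Set.inter_subset_left hp)
  · rintro ⟨R, hR, hR1, hR2⟩
    refine ⟨inOutRep R ∪ M, Set.union_subset_union_left _ fun w hw => hw.1,
      hR.isReg_inOutRep.union (h1.compl.inter h2.compl).isReg_canonRep, ?_⟩
    rw [syncRel_union, syncRel_inOutRep, hM, hS]
    refine Set.Subset.antisymm (Set.union_subset hR2.subset_compl_right Set.inter_subset_right)
      fun p hp => (em (p ∈ R)).imp_right fun hpR => ⟨fun hp1 => hpR (hR1 hp1), hp⟩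
end

section
/- Let S ⊆ (Σ∪Γ)* be a regular language with finite shiftlag, and suppose S is the full γ-lagged representation of its relation, i.e., S = {w ∈ L_{≤γ}·(Σ* + Γ*) | ⟦w⟧ ∈ ⟦S⟧}. Then for every y ∈ (Σ∪Γ)* with lag(y) ≤ γ, the residual relation satisfies ⟦y⟧⁻¹⟦S⟧ = ⟦y⁻¹S⟧, where (u,v)⁻¹R = {(x,z) | (ux, vz) ∈ R} and y⁻¹S = {z | yz ∈ S}. -/
open List

/-
The inclusion `⟦y⁻¹S⟧ ⊆ ⟦y⟧⁻¹⟦S⟧` holds for any language. Conversely, if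
`(π_i(y) x, π_o(y) z) ∈ ⟦S⟧`, it suffices to synchronize `(x, z)` by a word `w` such that `y w`
still lies in `L_{≤g}·(Σ* + Γ*)`: fullness of `S` then puts `y w` in `S`. Such a `w` is built
greedily, emitting an output letter while the running balance is positive and an input letter
otherwise, until one side is exhausted; the balance then stays within `[-g, g]` as soon as
`g ≥ 1`, which holds unless `y` is empty.
-/

def balance {σ γ : Type} (w : List (σ ⊕ γ)) : ℤ :=
  ((w.countP Sum.isLeft : ℕ) : ℤ) - ((w.countP Sum.isRight : ℕ) : ℤ)

def OneSided {σ γ : Type} (q : List (σ ⊕ γ)) : Prop :=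
  (∃ x : List σ, q = x.map Sum.inl) ∨ (∃ z : List γ, q = z.map Sum.inr)

section Balance

variable {σ γ : Type}

@[simp] lemma balance_nil : balance ([] : List (σ ⊕ γ)) = 0 := rfl

@[simp] lemma balance_cons_inl (a : σ) (w : List (σ ⊕ γ)) :
    balance (Sum.inl a :: w) = balance w + 1 := by
  simp only [balance, countP_cons, Sum.isLeft_inl, Sum.isRight_inl]
  push_cast
  ring

@[simp] lemma balance_cons_inr (b : γ) (w : List (σ ⊕ γ)) :
    balance (Sum.inr b :: w) = balance w - 1 := by
  simp only [balance, countP_cons, Sum.isLeft_inr, Sum.isRight_inr]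
  push_cast
  ring

lemma balance_append (u v : List (σ ⊕ γ)) : balance (u ++ v) = balance u + balance v := by
  simp only [balance, countP_append]
  push_cast
  ring

lemma lagW_le_iff {w : List (σ ⊕ γ)} {g : ℕ} : lagW w ≤ g ↔ ∀ i, lagAt w i ≤ g := by
  refine ⟨fun h i => ?_, fun h => Finset.sup_le fun i _ => h i⟩
  have hle : lagAt w (min i w.length) ≤ lagW w :=
    Finset.le_sup (f := lagAt w) (Finset.mem_range.2 (Nat.lt_succ_of_le (min_le_right _ _)))
  have htake : lagAt w (min i w.length) = lagAt w i := by
    simp only [lagAt, ← take_take, take_length]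
  omega

lemma one_le_lagW_of_ne_nil {w : List (σ ⊕ γ)} (hw : w ≠ []) : 1 ≤ lagW w := by
  obtain ⟨a, t, rfl⟩ := exists_cons_of_ne_nil hw
  have h1 : lagAt (a :: t) 1 = 1 := by
    cases a <;> simp [lagAt]
  exact h1 ▸ lagW_le_iff.1 le_rfl 1

lemma lagW_append_le {y w : List (σ ⊕ γ)} {g : ℕ} (hy : lagW y ≤ g)
    (hw : ∀ j, (balance y + balance (w.take j)).natAbs ≤ g) : lagW (y ++ w) ≤ g := by
  refine lagW_le_iff.2 fun i => ?_
  have hlag : lagAt (y ++ w) i = (balance (y.take i) + balance (w.take (i - y.length))).natAbs := by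
    rw [lagAt, take_append, ← balance_append]
    rfl
  rw [hlag]
  rcases le_or_gt i y.length with hi | hi
  · rw [Nat.sub_eq_zero_of_le hi, take_zero, balance_nil, add_zero]
    exact lagW_le_iff.1 hy i
  · rw [take_of_length_le hi.le]
    exact hw _

end Balance

lemma syncPair_append {σ γ : Type} (u v : List (σ ⊕ γ)) :
    syncPair (u ++ v) = (piIn u ++ (syncPair v).1, piOut u ++ (syncPair v).2) := by
  simp [syncPair, piIn, piOut, filterMap_append]

lemma exists_syncPair_eq_balanced {σ γ : Type} {g : ℕ} (hg : 1 ≤ g) (x : List σ) :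
    ∀ (z : List γ) (d : ℤ), d.natAbs ≤ g →
      ∃ w q : List (σ ⊕ γ), syncPair (w ++ q) = (x, z) ∧ OneSided q ∧
        ∀ j, (d + balance (w.take j)).natAbs ≤ g := by
  induction x with
  | nil =>
    intro z d hd
    refine ⟨[], z.map Sum.inr, ?_, Or.inr ⟨z, rfl⟩, by simpa using hd⟩
    simp [syncPair, piIn, piOut, filterMap_map, Function.comp_def]
  | cons a x ihx =>
    intro z
    induction z with
    | nil =>
      intro d hd
      refine ⟨[], (a :: x).map Sum.inl, ?_, Or.inl ⟨a :: x, rfl⟩, by simpa using hd⟩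
      simp [syncPair, piIn, piOut, filterMap_map, Function.comp_def]
    | cons b z ihz =>
      intro d hd
      rcases le_or_gt 1 d with hd1 | hd1
      · obtain ⟨w, q, hwq, hq, hbal⟩ := ihz (d - 1) (by omega)
        refine ⟨Sum.inr b :: w, q, ?_, hq, ?_⟩
        · simpa [syncPair, piIn, piOut, filterMap_cons] using hwq
        · rintro (_ | j)
          · simpa using hd
          · simpa [sub_add_eq_add_sub, add_sub_assoc'] using hbal j
      · obtain ⟨w, q, hwq, hq, hbal⟩ := ihx (b :: z) (d + 1) (by omega)
        refine ⟨Sum.inl a :: w, q, ?_, hq, ?_⟩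
        · simpa [syncPair, piIn, piOut, filterMap_cons] using hwq
        · rintro (_ | j)
          · simpa using hd
          · simpa [add_comm, add_left_comm] using hbal j

lemma exists_syncPair_eq_append_lagged {σ γ : Type} {g : ℕ} {y : List (σ ⊕ γ)}
    (hy : lagW y ≤ g) (hne : y ≠ []) (xz : List σ × List γ) :
    ∃ w, syncPair w = xz ∧
      ∃ p q : List (σ ⊕ γ), lagW p ≤ g ∧ OneSided q ∧ y ++ w = p ++ q := by
  have hg : 1 ≤ g := (one_le_lagW_of_ne_nil hne).trans hy
  have hd : (balance y).natAbs ≤ g := by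
    have h := lagW_le_iff.1 hy y.length
    rwa [lagAt, take_length] at h
  obtain ⟨w, q, hwq, hq, hbal⟩ := exists_syncPair_eq_balanced hg xz.1 xz.2 _ hd
  exact ⟨w ++ q, hwq, y ++ w, q, lagW_append_le hy hbal, hq, (append_assoc _ _ _).symm⟩

theorem stmt15_general {σ γ : Type} (S : Set (List (σ ⊕ γ))) (g : ℕ)
    (hfull : S = {w | (∃ p q : List (σ ⊕ γ), lagW p ≤ g ∧
        ((∃ x : List σ, q = x.map Sum.inl) ∨ (∃ yo : List γ, q = yo.map Sum.inr)) ∧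
        w = p ++ q) ∧ syncPair w ∈ syncRel S}) :
    ∀ y : List (σ ⊕ γ), lagW y ≤ g →
      {p : List σ × List γ | (piIn y ++ p.1, piOut y ++ p.2) ∈ syncRel S} =
        syncRel (leftQuot y S) := by
  intro y hy
  ext p
  constructor
  · intro hp
    rcases eq_or_ne y [] with rfl | hne
    · simpa [leftQuot, piIn, piOut] using hp
    obtain ⟨w, hw, hlagged⟩ := exists_syncPair_eq_append_lagged hy hne p
    refine ⟨w, ?_, hw⟩
    show y ++ w ∈ S
    rw [hfull]
    exact ⟨hlagged, by rwa [syncPair_append, hw]⟩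
  · rintro ⟨w, hw, rfl⟩
    exact ⟨y ++ w, hw, syncPair_append y w⟩

/-- if the regular finite-shiftlag language `S` is the full `γ₀`-lagged
representation of its relation, i.e. `S = {w ∈ L_{≤γ₀}·(Σ* + Γ*) | ⟦w⟧ ∈ ⟦S⟧}`, then for
every `y` with `lag(y) ≤ γ₀`, `⟦y⟧⁻¹⟦S⟧ = ⟦y⁻¹S⟧`. -/
theorem stmt15 {σ γ : Type} (S : Set (List (σ ⊕ γ))) (g : ℕ)
    (hS : IsReg S) (hSfsl : FiniteShiftlag S)
    (hfull : S = {w | (∃ p q : List (σ ⊕ γ), lagW p ≤ g ∧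
        ((∃ x : List σ, q = x.map Sum.inl) ∨ (∃ yo : List γ, q = yo.map Sum.inr)) ∧
        w = p ++ q) ∧ syncPair w ∈ syncRel S}) :
    ∀ y : List (σ ⊕ γ), lagW y ≤ g →
      {p : List σ × List γ | (piIn y ++ p.1, piOut y ++ p.2) ∈ syncRel S} =
        syncRel (leftQuot y S) :=
  stmt15_general S g hfull
end
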